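/- For every real η ∈ (0, 1] and every integer m ≥ 1, ( Σ_{j=1}^{m} η^{−2j} ) · F_{m+1}(η) ≥ ( 1 + Σ_{j=1}^{m} η^{−2j} ) · F_m(η); equivalently, (η^{−2} + ⋯ + η^{−2m})/(1 + η^{−2} + ⋯ + η^{−2m}) ≥ (η + η² + ⋯ + η^{m})/(η + η² + ⋯ + η^{m+1}). -/

import Mathlib

/-!
Write `S = ∑_{j=1}^m η^(-2j)`. Since `F_{m+1}(η) = F_m(η) + η^(m+1)`, the inequality is equivalent to
`F_m(η) ≤ S η^(m+1)`. Reflecting the sum, `F_m(η) = ∑_{j=1}^m η^(m+1-j)`, and this holds term by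
term: `η^(-2j) η^(m+1) = η^(m+1-2j) ≥ η^(m+1-j)` because `0 < η ≤ 1`.
-/

open Finset

noncomputable def Efun (k : ℕ) (x : ℝ) : ℝ := ∑ j ∈ Finset.Icc 1 (2 * k), x ^ (-(j : ℤ))

noncomputable def Ffun (k : ℕ) (x : ℝ) : ℝ := ∑ j ∈ Finset.Icc 1 k, x ^ j

noncomputable def Tfun (k : ℕ) (ρ η : ℝ) : ℝ := Efun k η - Efun k ρ

lemma Ffun_succ (k : ℕ) (x : ℝ) : Ffun (k + 1) x = Ffun k x + x ^ (k + 1) :=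
  sum_Icc_succ_top (by omega) _

lemma Ffun_eq_sum_pow_reflect (k : ℕ) (x : ℝ) :
    Ffun k x = ∑ j ∈ Icc 1 k, x ^ (k + 1 - j) := by
  rw [Ffun, ← Ico_add_one_right_eq_Icc,
    sum_Ico_reflect (fun i => x ^ i) 1 (Nat.le_succ (k + 1))]
  simp

lemma Ffun_le_sum_zpow_mul_pow {x : ℝ} (hx0 : 0 < x) (hx1 : x ≤ 1) (k : ℕ) :
    Ffun k x ≤ (∑ j ∈ Icc 1 k, x ^ (-(2 * (j : ℤ)))) * x ^ (k + 1) := by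
  rw [Ffun_eq_sum_pow_reflect, sum_mul]
  refine sum_le_sum fun j hj => ?_
  obtain ⟨-, hjk⟩ := mem_Icc.mp hj
  calc x ^ (k + 1 - j) = x ^ ((k : ℤ) + 1 - j) := by
        rw [← zpow_natCast]; push_cast [Nat.cast_sub (by omega : j ≤ k + 1)]; rfl
    _ ≤ x ^ ((k : ℤ) + 1 - 2 * j) := zpow_le_zpow_right_of_le_one₀ hx0 hx1 (by omega)
    _ = x ^ (-(2 * (j : ℤ))) * x ^ (k + 1) := by
        rw [← zpow_natCast, ← zpow_add₀ hx0.ne']; push_cast; ring_nf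

theorem elementary_ineq_eta_le_one_general
    (η : ℝ) (hη0 : 0 < η) (hη1 : η ≤ 1) (m : ℕ) :
    (∑ j ∈ Finset.Icc 1 m, η ^ (-(2 * (j : ℤ)))) * Ffun (m + 1) η ≥
      (1 + ∑ j ∈ Finset.Icc 1 m, η ^ (-(2 * (j : ℤ)))) * Ffun m η := by
  rw [Ffun_succ]
  linarith [Ffun_le_sum_zpow_mul_pow hη0 hη1 m]

/-- For `η ∈ (0,1]` and `m ≥ 1`:
`(Σ_{j=1}^m η^{-2j})·F_{m+1}(η) ≥ (1 + Σ_{j=1}^m η^{-2j})·F_m(η)`. -/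
theorem elementary_ineq_eta_le_one
    (η : ℝ) (hη0 : 0 < η) (hη1 : η ≤ 1) (m : ℕ) (hm : 1 ≤ m) :
    (∑ j ∈ Finset.Icc 1 m, η ^ (-(2 * (j : ℤ)))) * Ffun (m + 1) η ≥
      (1 + ∑ j ∈ Finset.Icc 1 m, η ^ (-(2 * (j : ℤ)))) * Ffun m η :=
  elementary_ineq_eta_le_one_general η hη0 hη1 m
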